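/- arXiv:1809.07984 — 5 statements merged into one kernel-verified Lean document; each statement's English description precedes it below -/
import Mathlib

section
/- If f : ℝ → ℝⁿ is differentiable at x with f(x) ≠ 0, then the inverted curve I∘f, where I(x) = x/‖x‖², is differentiable at x with ‖(I∘f)'(x)‖ = ‖f'(x)‖ / ‖f(x)‖². -/
open EuclideanGeometry

/-! `t ↦ (‖f t‖ ^ 2)⁻¹ • f t` is `f` followed by inversion in the unit sphere, whose differential
at `y ≠ 0` is `‖y‖⁻²` times the reflection in the hyperplane `y⊥`. A reflection is an isometry,
so it only rescales the velocity `f'(x)` by `‖f(x)‖⁻²`. -/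

variable {F : Type*} [NormedAddCommGroup F] [InnerProductSpace ℝ F]

theorem EuclideanGeometry.inversion_zero_one (y : F) : inversion (0 : F) 1 y = (‖y‖ ^ 2)⁻¹ • y := by
  simp [inversion_def, dist_eq_norm]

theorem HasDerivAt.inv_norm_sq_smul {f : ℝ → F} {f' : F} {x : ℝ} (hf : HasDerivAt f f' x)
    (hx : f x ≠ 0) :
    HasDerivAt (fun t => (‖f t‖ ^ 2)⁻¹ • f t)
      ((‖f x‖ ^ 2)⁻¹ • (ℝ ∙ f x)ᗮ.reflection f') x := by
  have h := (hasFDerivAt_inversion (c := (0 : F)) (R := 1) hx).comp_hasDerivAt x hf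
  convert h using 1
  · exact funext fun t => (inversion_zero_one (f t)).symm
  · simp only [dist_zero_right, sub_zero, one_div, inv_pow, FunLike.coe_smul, Pi.smul_apply]
    rfl

/-- If `f : ℝ → ℝⁿ` is differentiable at `x` with `f x ≠ 0`, then the inverted
curve `I ∘ f` (with `I(x) = x/‖x‖²`) is differentiable at `x` and
`‖(I∘f)'(x)‖ = ‖f'(x)‖/‖f(x)‖²`. -/
theorem inversion_deriv_norm (n : ℕ) (f : ℝ → EuclideanSpace ℝ (Fin n)) (x : ℝ)
    (hf : DifferentiableAt ℝ f x) (hx : f x ≠ 0) :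
    DifferentiableAt ℝ (fun t => (‖f t‖ ^ 2)⁻¹ • f t) x ∧
      ‖deriv (fun t => (‖f t‖ ^ 2)⁻¹ • f t) x‖ = ‖deriv f x‖ / ‖f x‖ ^ 2 := by
  have h := hf.hasDerivAt.inv_norm_sq_smul hx
  refine ⟨h.differentiableAt, ?_⟩
  rw [h.deriv, norm_smul, LinearIsometryEquiv.norm_map, norm_inv, norm_pow, norm_norm,
    inv_mul_eq_div]
end

section
/- Let v₁, v₂, v₃ be three affinely independent points in ℝⁿ lying on a circle with center c and radius r, and let φᵢ be the interior angle of the triangle v₁v₂v₃ at vᵢ. Then c = ((sin 2φ₁)v₁ + (sin 2φ₂)v₂ + (sin 2φ₃)v₃) / (sin 2φ₁ + sin 2φ₂ + sin 2φ₃). -/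
set_option maxHeartbeats 1000000

open EuclideanGeometry

open scoped RealInnerProductSpace in
private lemma sin_two_angle_aux {F : Type*} [NormedAddCommGroup F] [InnerProductSpace ℝ F]
    (x y : F) (hx : x ≠ 0) (hy : y ≠ 0) :
    Real.sin (2 * InnerProductGeometry.angle x y) =
      2 * Real.sqrt (‖x‖ ^ 2 * ‖y‖ ^ 2 - ⟪x, y⟫ ^ 2) * ⟪x, y⟫ / (‖x‖ ^ 2 * ‖y‖ ^ 2) := by
  have hN : ‖x‖ * ‖y‖ ≠ 0 :=
    mul_ne_zero (norm_ne_zero_iff.2 hx) (norm_ne_zero_iff.2 hy)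
  have hs := InnerProductGeometry.sin_angle_mul_norm_mul_norm x y
  rw [real_inner_self_eq_norm_sq, real_inner_self_eq_norm_sq,
    show ⟪x, y⟫ * ⟪x, y⟫ = ⟪x, y⟫ ^ 2 by ring] at hs
  have hsin : Real.sin (InnerProductGeometry.angle x y) =
      Real.sqrt (‖x‖ ^ 2 * ‖y‖ ^ 2 - ⟪x, y⟫ ^ 2) / (‖x‖ * ‖y‖) :=
    (eq_div_iff hN).2 hs
  rw [Real.sin_two_mul, hsin, InnerProductGeometry.cos_angle]
  field_simp [norm_ne_zero_iff.2 hx, norm_ne_zero_iff.2 hy]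
  try tauto

open scoped RealInnerProductSpace in
/-- For three affinely independent points `v₁ v₂ v₃` on a circle with center `c`
(the center lying in their affine span) and interior triangle angles `φᵢ` at `vᵢ`,
`c = ((sin 2φ₁)v₁ + (sin 2φ₂)v₂ + (sin 2φ₃)v₃)/(sin 2φ₁ + sin 2φ₂ + sin 2φ₃)`. -/
theorem circumcenter_barycentric_sin (n : ℕ) (v₁ v₂ v₃ c : EuclideanSpace ℝ (Fin n)) (r : ℝ)
    (hind : AffineIndependent ℝ ![v₁, v₂, v₃])
    (h₁ : ‖v₁ - c‖ = r) (h₂ : ‖v₂ - c‖ = r) (h₃ : ‖v₃ - c‖ = r)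
    (hc : c ∈ affineSpan ℝ ({v₁, v₂, v₃} : Set (EuclideanSpace ℝ (Fin n)))) :
    c = (Real.sin (2 * ∠ v₂ v₁ v₃) + Real.sin (2 * ∠ v₁ v₂ v₃) + Real.sin (2 * ∠ v₁ v₃ v₂))⁻¹ •
        (Real.sin (2 * ∠ v₂ v₁ v₃) • v₁ + Real.sin (2 * ∠ v₁ v₂ v₃) • v₂ +
          Real.sin (2 * ∠ v₁ v₃ v₂) • v₃) := by
  -- distinctness of vertices
  have hv21 : v₂ ≠ v₁ := by
    have := hind.injective.ne (show (1 : Fin 3) ≠ 0 by decide); simpa using this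
  have hv31 : v₃ ≠ v₁ := by
    have := hind.injective.ne (show (2 : Fin 3) ≠ 0 by decide); simpa using this
  have hv32 : v₃ ≠ v₂ := by
    have := hind.injective.ne (show (2 : Fin 3) ≠ 1 by decide); simpa using this
  have hx21 : v₂ - v₁ ≠ 0 := sub_ne_zero.2 hv21
  have hx31 : v₃ - v₁ ≠ 0 := sub_ne_zero.2 hv31
  have hx12 : v₁ - v₂ ≠ 0 := sub_ne_zero.2 hv21.symm
  have hx32 : v₃ - v₂ ≠ 0 := sub_ne_zero.2 hv32
  have hx13 : v₁ - v₃ ≠ 0 := sub_ne_zero.2 hv31.symm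
  have hx23 : v₂ - v₃ ≠ 0 := sub_ne_zero.2 hv32.symm
  set A : ℝ := ‖v₂ - v₁‖ ^ 2 with hA_def
  set B : ℝ := ‖v₃ - v₁‖ ^ 2 with hB_def
  set G : ℝ := ⟪v₂ - v₁, v₃ - v₁⟫ with hG_def
  set Cn : ℝ := ‖v₃ - v₂‖ ^ 2 with hCn_def
  have hA : (0 : ℝ) < A := pow_pos (norm_pos_iff.2 hx21) 2
  have hB : (0 : ℝ) < B := pow_pos (norm_pos_iff.2 hx31) 2
  have hC : (0 : ℝ) < Cn := pow_pos (norm_pos_iff.2 hx32) 2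
  -- Cn in terms of A, B, G
  have hCeq : Cn = A + B - 2 * G := by
    rw [hCn_def, show v₃ - v₂ = (v₃ - v₁) - (v₂ - v₁) by abel, norm_sub_sq_real,
      ← hA_def, ← hB_def, real_inner_comm, ← hG_def]
    ring
  -- strict Cauchy–Schwarz from affine independence
  have hD : (0 : ℝ) < A * B - G ^ 2 := by
    by_contra h
    push_neg at h
    have hcs : |G| ≤ ‖v₂ - v₁‖ * ‖v₃ - v₁‖ := abs_real_inner_le_norm _ _
    have heq : ‖⟪v₂ - v₁, v₃ - v₁⟫‖ = ‖v₂ - v₁‖ * ‖v₃ - v₁‖ := by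
      rw [Real.norm_eq_abs, ← hG_def]
      refine le_antisymm hcs ?_
      nlinarith [sq_abs G, abs_nonneg G, norm_nonneg (v₂ - v₁), norm_nonneg (v₃ - v₁)]
    obtain ⟨t, -, ht⟩ := (norm_inner_eq_norm_iff hx21 hx31).1 heq
    have hcol : Collinear ℝ ({v₁, v₂, v₃} : Set (EuclideanSpace ℝ (Fin n))) := by
      rw [collinear_iff_of_mem (Set.mem_insert v₁ _)]
      refine ⟨v₂ - v₁, ?_⟩
      intro p hp
      rcases hp with rfl | rfl | rfl
      · exact ⟨0, by simp⟩
      · exact ⟨1, by simp⟩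
      · exact ⟨t, by rw [← ht]; simp⟩
    exact affineIndependent_iff_not_collinear_set.1 hind hcol
  set S : ℝ := Real.sqrt (A * B - G ^ 2) with hS_def
  have hS : (0 : ℝ) < S := Real.sqrt_pos.2 hD
  -- c - v₁ lies in the span of the edge vectors
  have h1mem : v₁ ∈ ({v₁, v₂, v₃} : Set (EuclideanSpace ℝ (Fin n))) := by simp
  have hm : c - v₁ ∈ vectorSpan ℝ ({v₁, v₂, v₃} : Set (EuclideanSpace ℝ (Fin n))) := by
    have := AffineSubspace.vsub_mem_direction hc (mem_affineSpan ℝ h1mem)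
    rwa [direction_affineSpan] at this
  rw [vectorSpan_eq_span_vsub_set_right ℝ h1mem] at hm
  have himg : ((fun x => x -ᵥ v₁) '' {v₁, v₂, v₃} : Set (EuclideanSpace ℝ (Fin n)))
      = {0, v₂ - v₁, v₃ - v₁} := by
    simp [Set.image_insert_eq, vsub_eq_sub]
  rw [himg] at hm
  have hm2 : c - v₁ ∈ Submodule.span ℝ ({v₂ - v₁, v₃ - v₁} :
      Set (EuclideanSpace ℝ (Fin n))) := by
    simpa [Submodule.span_insert_eq_span, Submodule.zero_mem, Submodule.span_insert] using hm
  obtain ⟨α, β, hu⟩ := Submodule.mem_span_pair.1 hm2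
  -- the two linear equations on α, β
  have hu₂ : ⟪v₂ - v₁, c - v₁⟫ = A / 2 := by
    have e : ‖(v₂ - v₁) - (c - v₁)‖ ^ 2 = ‖c - v₁‖ ^ 2 := by
      rw [show (v₂ - v₁) - (c - v₁) = v₂ - c by abel, h₂, ← h₁, norm_sub_rev]
    rw [norm_sub_sq_real, ← hA_def] at e
    linarith
  have hu₃ : ⟪v₃ - v₁, c - v₁⟫ = B / 2 := by
    have e : ‖(v₃ - v₁) - (c - v₁)‖ ^ 2 = ‖c - v₁‖ ^ 2 := by
      rw [show (v₃ - v₁) - (c - v₁) = v₃ - c by abel, h₃, ← h₁, norm_sub_rev]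
    rw [norm_sub_sq_real, ← hB_def] at e
    linarith
  have e1 : α * A + β * G = A / 2 := by
    rw [← hu, inner_add_right, real_inner_smul_right, real_inner_smul_right,
      real_inner_self_eq_norm_sq, ← hA_def, ← hG_def] at hu₂
    linarith
  have e2 : α * G + β * B = B / 2 := by
    rw [← hu, inner_add_right, real_inner_smul_right, real_inner_smul_right,
      real_inner_self_eq_norm_sq, ← hB_def] at hu₃
    rw [real_inner_comm, ← hG_def] at hu₃
    linarith
  have hαv : α = B * (A - G) / (2 * (A * B - G ^ 2)) := by
    rw [eq_div_iff (by positivity)]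
    linear_combination 2 * B * e1 - 2 * G * e2
  have hβv : β = A * (B - G) / (2 * (A * B - G ^ 2)) := by
    rw [eq_div_iff (by positivity)]
    linear_combination 2 * A * e2 - 2 * G * e1
  -- the three sines
  have hs₁ : Real.sin (2 * ∠ v₂ v₁ v₃) = 2 * S * G / (A * B) := by
    have h := sin_two_angle_aux (v₂ - v₁) (v₃ - v₁) hx21 hx31
    rw [← hA_def, ← hB_def, ← hG_def, ← hS_def] at h
    exact h
  have hs₂ : Real.sin (2 * ∠ v₁ v₂ v₃) = 2 * S * (A - G) / (A * Cn) := by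
    have h := sin_two_angle_aux (v₁ - v₂) (v₃ - v₂) hx12 hx32
    have hn12 : ‖v₁ - v₂‖ ^ 2 = A := by rw [norm_sub_rev]
    have hi2 : ⟪v₁ - v₂, v₃ - v₂⟫ = A - G := by
      rw [show v₁ - v₂ = -(v₂ - v₁) by abel, show v₃ - v₂ = (v₃ - v₁) - (v₂ - v₁) by abel,
        inner_neg_left, inner_sub_right, real_inner_self_eq_norm_sq, ← hA_def, ← hG_def]
      ring
    rw [hn12, ← hCn_def, hi2, show A * Cn - (A - G) ^ 2 = A * B - G ^ 2 by
      rw [hCeq]; ring, ← hS_def] at h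
    exact h
  have hs₃ : Real.sin (2 * ∠ v₁ v₃ v₂) = 2 * S * (B - G) / (B * Cn) := by
    have h := sin_two_angle_aux (v₁ - v₃) (v₂ - v₃) hx13 hx23
    have hn13 : ‖v₁ - v₃‖ ^ 2 = B := by rw [norm_sub_rev]
    have hn23 : ‖v₂ - v₃‖ ^ 2 = Cn := by rw [norm_sub_rev]
    have hi3 : ⟪v₁ - v₃, v₂ - v₃⟫ = B - G := by
      rw [show v₁ - v₃ = -(v₃ - v₁) by abel, show v₂ - v₃ = (v₂ - v₁) - (v₃ - v₁) by abel,
        inner_neg_left, inner_sub_right, real_inner_self_eq_norm_sq, ← hB_def,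
        real_inner_comm, ← hG_def]
      ring
    rw [hn13, hn23, hi3, show B * Cn - (B - G) ^ 2 = A * B - G ^ 2 by
      rw [hCeq]; ring, ← hS_def] at h
    exact h
  rw [hs₁, hs₂, hs₃]
  have hksum : 2 * S * G / (A * B) + 2 * S * (A - G) / (A * Cn) + 2 * S * (B - G) / (B * Cn)
      = 4 * S * (A * B - G ^ 2) / (A * B * Cn) := by
    rw [hCeq]
    have hC' : A + B - 2 * G ≠ 0 := by rw [← hCeq]; exact hC.ne'
    field_simp
    ring
  rw [hksum]
  have hk0 : 4 * S * (A * B - G ^ 2) / (A * B * Cn) ≠ 0 :=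
    (div_pos (mul_pos (mul_pos (by norm_num : (0:ℝ) < 4) hS) hD)
      (mul_pos (mul_pos hA hB) hC)).ne'
  rw [eq_inv_smul_iff₀ hk0]
  have hc2 : c = v₁ + (α • (v₂ - v₁) + β • (v₃ - v₁)) := by rw [hu]; abel
  rw [hc2]
  have hA' : A ≠ 0 := hA.ne'
  have hB' : B ≠ 0 := hB.ne'
  have hCn' : Cn ≠ 0 := hC.ne'
  have hD' : A * B - G ^ 2 ≠ 0 := hD.ne'
  have hC' : A + B - 2 * G ≠ 0 := by rw [← hCeq]; exact hC.ne'
  have hk1 : (4 * S * (A * B - G ^ 2) / (A * B * Cn)) * (1 - α - β)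
      = 2 * S * G / (A * B) := by
    rw [hαv, hβv, hCeq]
    field_simp
    rw [div_eq_iff (by rw [mul_comm G]; exact hC')]
    ring
  have hkα : (4 * S * (A * B - G ^ 2) / (A * B * Cn)) * α = 2 * S * (A - G) / (A * Cn) := by
    rw [hαv]
    field_simp
    ring
  have hkβ : (4 * S * (A * B - G ^ 2) / (A * B * Cn)) * β = 2 * S * (B - G) / (B * Cn) := by
    rw [hβv]
    field_simp
    ring
  linear_combination (norm := module) hk1 • v₁ + hkα • v₂ + hkβ • v₃
end

section
/- Let v₁, v₂, v₃ be three non-collinear points in ℝⁿ and wᵢ = v_{i+1} − vᵢ (indices mod 3). Then the unit tangent vector of the circle through v₁, v₂, v₃ at v₁, oriented from v₁ toward v₂, is t₁ = (‖w₃‖² w₁ + ‖w₁‖² w₃) / (‖w₁‖·‖w₂‖·‖w₃‖), and in particular this vector has norm 1. -/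
open RealInnerProductSpace

private lemma exists_angle (co si : ℝ) (h : co ^ 2 + si ^ 2 = 1) (hne : co ≠ 1) :
    ∃ α : ℝ, 0 < α ∧ α < 2 * Real.pi ∧ Real.cos α = co ∧ Real.sin α = si := by
  have h1 : -1 ≤ co := by nlinarith [sq_nonneg si]
  have h2 : co ≤ 1 := by nlinarith [sq_nonneg si]
  have hpi := Real.pi_pos
  have hlt : co < 1 := lt_of_le_of_ne h2 hne
  have harcpos : 0 < Real.arccos co := Real.arccos_pos.mpr hlt
  have harcle : Real.arccos co ≤ Real.pi := Real.arccos_le_pi co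
  have hsinarc : Real.sin (Real.arccos co) = Real.sqrt (1 - co ^ 2) := Real.sin_arccos co
  have hsq : 1 - co ^ 2 = si ^ 2 := by linarith
  rcases le_or_gt 0 si with hs | hs
  · refine ⟨Real.arccos co, harcpos, by linarith, Real.cos_arccos h1 h2, ?_⟩
    rw [hsinarc, hsq, Real.sqrt_sq hs]
  · refine ⟨2 * Real.pi - Real.arccos co, by linarith, by linarith, ?_, ?_⟩
    · rw [Real.cos_sub, Real.cos_two_pi, Real.sin_two_pi, Real.cos_arccos h1 h2]; ring
    · rw [Real.sin_sub, Real.cos_two_pi, Real.sin_two_pi, hsinarc, hsq,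
        Real.sqrt_sq_eq_abs, abs_of_neg hs]; ring

private lemma norm_comb {E : Type*} [NormedAddCommGroup E] [InnerProductSpace ℝ E]
    (u t : E) (A B r : ℝ) (hu : ‖u‖ = r) (ht : ‖t‖ = 1) (hut : ⟪u, t⟫ = 0) :
    ‖A • u + B • t‖ ^ 2 = A ^ 2 * r ^ 2 + B ^ 2 := by
  rw [norm_add_sq_real, real_inner_smul_left, real_inner_smul_right, hut, norm_smul, norm_smul,
    hu, ht, Real.norm_eq_abs, Real.norm_eq_abs, mul_pow, mul_pow, sq_abs, sq_abs]
  ring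

private lemma trig_id (x y : ℝ) :
    (1 - Real.cos (2 * y)) * Real.sin (2 * x) - (1 - Real.cos (2 * x)) * Real.sin (2 * y)
      = 4 * Real.sin x * Real.sin y * Real.sin (y - x) := by
  rw [Real.sin_two_mul, Real.sin_two_mul, Real.cos_two_mul, Real.cos_two_mul, Real.sin_sub]
  linear_combination (-(4 * Real.sin x * Real.cos x)) * (Real.sin_sq_add_cos_sq y)
    + (4 * Real.sin y * Real.cos y) * (Real.sin_sq_add_cos_sq x)

set_option maxHeartbeats 1000000 in
/-- For three non-collinear points `v₁ v₂ v₃` on a circle with center `c` and radius `r`,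
with `w₁ = v₂−v₁`, `w₂ = v₃−v₂`, `w₃ = v₁−v₃`, the vector
`t₁ = (‖w₃‖² w₁ + ‖w₁‖² w₃)/(‖w₁‖‖w₂‖‖w₃‖)` has norm 1 and is the tangent at `v₁`
of the arclength parametrization of the circle that starts at `v₁` and passes through
`v₂` and then `v₃`. -/
theorem circle_tangent_formula (n : ℕ) (v₁ v₂ v₃ c : EuclideanSpace ℝ (Fin n)) (r : ℝ)
    (hind : AffineIndependent ℝ ![v₁, v₂, v₃])
    (h₁ : ‖v₁ - c‖ = r) (h₂ : ‖v₂ - c‖ = r) (h₃ : ‖v₃ - c‖ = r)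
    (hc : c ∈ affineSpan ℝ ({v₁, v₂, v₃} : Set (EuclideanSpace ℝ (Fin n)))) :
    ‖(‖v₂ - v₁‖ * ‖v₃ - v₂‖ * ‖v₁ - v₃‖)⁻¹ •
        (‖v₁ - v₃‖ ^ 2 • (v₂ - v₁) + ‖v₂ - v₁‖ ^ 2 • (v₁ - v₃))‖ = 1 ∧
      ∃ x : ℝ → EuclideanSpace ℝ (Fin n), x 0 = v₁ ∧
        (∃ s₂ s₃ : ℝ, 0 < s₂ ∧ s₂ < s₃ ∧ s₃ < 2 * Real.pi * r ∧ x s₂ = v₂ ∧ x s₃ = v₃) ∧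
        (∀ θ : ℝ, ‖x θ - c‖ = r) ∧
        (∀ θ : ℝ, ∃ d : EuclideanSpace ℝ (Fin n), HasDerivAt x d θ ∧ ‖d‖ = 1) ∧
        HasDerivAt x ((‖v₂ - v₁‖ * ‖v₃ - v₂‖ * ‖v₁ - v₃‖)⁻¹ •
          (‖v₁ - v₃‖ ^ 2 • (v₂ - v₁) + ‖v₂ - v₁‖ ^ 2 • (v₁ - v₃))) 0 := by
  have hinj := hind.injective
  have hne12 : v₁ ≠ v₂ := by
    intro h
    exact absurd (hinj (show ![v₁,v₂,v₃] 0 = ![v₁,v₂,v₃] 1 by simpa using h)) (by decide)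
  have hne23 : v₂ ≠ v₃ := by
    intro h
    exact absurd (hinj (show ![v₁,v₂,v₃] 1 = ![v₁,v₂,v₃] 2 by simpa using h)) (by decide)
  have hne31 : v₃ ≠ v₁ := by
    intro h
    exact absurd (hinj (show ![v₁,v₂,v₃] 2 = ![v₁,v₂,v₃] 0 by simpa using h)) (by decide)
  set w₁ : EuclideanSpace ℝ (Fin n) := v₂ - v₁ with hw1
  set w₃ : EuclideanSpace ℝ (Fin n) := v₁ - v₃ with hw3
  set u : EuclideanSpace ℝ (Fin n) := v₁ - c with hudef
  set a : ℝ := ‖w₁‖ with hadef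
  set b : ℝ := ‖v₃ - v₂‖ with hbdef
  set cc : ℝ := ‖w₃‖ with hccdef
  set g : ℝ := ⟪w₁, w₃⟫ with hgdef
  have ha : 0 < a := norm_pos_iff.mpr (sub_ne_zero.mpr hne12.symm)
  have hbpos : 0 < b := norm_pos_iff.mpr (sub_ne_zero.mpr hne23.symm)
  have hcc : 0 < cc := norm_pos_iff.mpr (sub_ne_zero.mpr hne31.symm)
  have h12 : ⟪w₁, u⟫ = -(a ^ 2) / 2 := by
    have hv2 : v₂ - c = w₁ + u := by rw [hw1, hudef]; abel
    have key := norm_add_sq_real w₁ u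
    rw [← hv2, h₂, h₁, ← hadef] at key
    linarith
  have h31 : ⟪w₃, u⟫ = cc ^ 2 / 2 := by
    have hv3 : v₃ - c = u - w₃ := by rw [hw3, hudef]; abel
    have key := norm_sub_sq_real u w₃
    rw [← hv3, h₃, h₁, ← hccdef, real_inner_comm w₃ u] at key
    linarith
  have hb2 : b ^ 2 = a ^ 2 + cc ^ 2 + 2 * g := by
    have hv : v₃ - v₂ = -(w₁ + w₃) := by rw [hw1, hw3]; abel
    have key := norm_add_sq_real w₁ w₃
    calc b ^ 2 = ‖w₁ + w₃‖ ^ 2 := by rw [hbdef, hv, norm_neg]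
    _ = a ^ 2 + cc ^ 2 + 2 * g := by rw [key, ← hadef, ← hccdef, ← hgdef]; ring
  -- span argument
  have hc' : c - v₁ ∈ vectorSpan ℝ ({v₁, v₂, v₃} : Set (EuclideanSpace ℝ (Fin n))) := by
    rw [← direction_affineSpan]
    have h1 : v₁ ∈ affineSpan ℝ ({v₁, v₂, v₃} : Set (EuclideanSpace ℝ (Fin n))) :=
      subset_affineSpan ℝ _ (by simp)
    simpa using AffineSubspace.vsub_mem_direction hc h1
  have hspan : vectorSpan ℝ ({v₁, v₂, v₃} : Set (EuclideanSpace ℝ (Fin n)))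
      = Submodule.span ℝ {v₂ - v₁, v₃ - v₁} := by
    rw [vectorSpan_eq_span_vsub_set_right ℝ
      (show v₁ ∈ ({v₁, v₂, v₃} : Set (EuclideanSpace ℝ (Fin n))) by simp)]
    have himg : ((· -ᵥ v₁) '' {v₁, v₂, v₃} : Set (EuclideanSpace ℝ (Fin n)))
        = insert (0 : EuclideanSpace ℝ (Fin n)) {v₂ - v₁, v₃ - v₁} := by
      simp [Set.image_insert_eq, vsub_eq_sub, sub_self]
    rw [himg, Submodule.span_insert_zero]
  rw [hspan, Submodule.mem_span_pair] at hc'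
  obtain ⟨p, q, hpq⟩ := hc'
  have hu_eq : u = (-p) • w₁ + q • w₃ := by
    rw [hudef, hw1, hw3]
    have hflip : v₁ - c = -(c - v₁) := by abel
    rw [hflip, ← hpq]
    module
  have eq1 : -p * a ^ 2 + q * g = -(a ^ 2) / 2 := by
    have key := h12
    rw [hu_eq, inner_add_right, real_inner_smul_right, real_inner_smul_right,
      real_inner_self_eq_norm_sq, ← hadef, ← hgdef] at key
    linarith
  have eq2 : -p * g + q * cc ^ 2 = cc ^ 2 / 2 := by
    have key := h31
    rw [hu_eq, inner_add_right, real_inner_smul_right, real_inner_smul_right,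
      real_inner_self_eq_norm_sq, ← hccdef, real_inner_comm w₁ w₃, ← hgdef] at key
    linarith
  have eqr : r ^ 2 = p * a ^ 2 / 2 + q * cc ^ 2 / 2 := by
    have h0 : ⟪u, u⟫ = ⟪(-p) • w₁ + q • w₃, u⟫ := by rw [← hu_eq]
    rw [inner_add_left, real_inner_smul_left, real_inner_smul_left, h12, h31] at h0
    have h1' : r ^ 2 = ⟪u, u⟫ := by rw [real_inner_self_eq_norm_sq, h₁]
    rw [h0] at h1'; linarith
  have hp : p * (a ^ 2 * cc ^ 2 - g ^ 2) = cc ^ 2 * (a ^ 2 + g) / 2 := by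
    linear_combination (-(cc ^ 2)) * eq1 + g * eq2
  have hq : q * (a ^ 2 * cc ^ 2 - g ^ 2) = a ^ 2 * (cc ^ 2 + g) / 2 := by
    linear_combination (-g) * eq1 + a ^ 2 * eq2
  have K : a ^ 2 * b ^ 2 * cc ^ 2 = 4 * r ^ 2 * (a ^ 2 * cc ^ 2 - g ^ 2) := by
    linear_combination a ^ 2 * cc ^ 2 * hb2 - 4 * (a ^ 2 * cc ^ 2 - g ^ 2) * eqr
      - 2 * a ^ 2 * hp - 2 * cc ^ 2 * hq
  have hG2 : b ^ 2 * cc ^ 2 * (r ^ 2 * a ^ 2 - a ^ 4 / 4) = r ^ 2 * a ^ 2 * (cc ^ 2 + g) ^ 2 := by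
    linear_combination (-(a ^ 2) / 4) * K + (r ^ 2 * a ^ 2 * cc ^ 2) * hb2
  have hG3 : b ^ 2 * a ^ 2 * (r ^ 2 * cc ^ 2 - cc ^ 4 / 4) = r ^ 2 * cc ^ 2 * (a ^ 2 + g) ^ 2 := by
    linear_combination (-(cc ^ 2) / 4) * K + (r ^ 2 * a ^ 2 * cc ^ 2) * hb2
  have hr : 0 < r := by
    rcases lt_or_eq_of_le (h₁ ▸ norm_nonneg u) with h | h
    · exact h
    · exfalso
      have e1 : v₁ = c := sub_eq_zero.mp (norm_eq_zero.mp (by rw [← hudef] at *; rw [h₁, ← h]))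
      have e2 : v₂ = c := sub_eq_zero.mp (norm_eq_zero.mp (by rw [h₂, ← h]))
      exact hne12 (e1.trans e2.symm)
  set t : EuclideanSpace ℝ (Fin n) := (a * b * cc)⁻¹ • (cc ^ 2 • w₁ + a ^ 2 • w₃) with htdef
  have hN : ‖cc ^ 2 • w₁ + a ^ 2 • w₃‖ ^ 2 = (a * b * cc) ^ 2 := by
    rw [norm_add_sq_real, norm_smul, norm_smul, real_inner_smul_left, real_inner_smul_right,
      ← hgdef, ← hadef, ← hccdef, Real.norm_eq_abs, Real.norm_eq_abs, mul_pow, mul_pow,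
      sq_abs, sq_abs]
    linear_combination (-(a ^ 2 * cc ^ 2)) * hb2
  have hNnorm : ‖cc ^ 2 • w₁ + a ^ 2 • w₃‖ = a * b * cc := by
    rw [← Real.sqrt_sq (norm_nonneg _), hN, Real.sqrt_sq (by positivity)]
  have ht1 : ‖t‖ = 1 := by
    rw [htdef, norm_smul, hNnorm, Real.norm_eq_abs, abs_inv, abs_of_pos (by positivity),
      inv_mul_cancel₀ (by positivity)]
  have htu : ⟪u, t⟫ = 0 := by
    rw [htdef, real_inner_smul_right, inner_add_right, real_inner_smul_right,
      real_inner_smul_right, real_inner_comm w₁ u, real_inner_comm w₃ u, h12, h31]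
    ring
  have hT2 : ⟪w₁, t⟫ = (a * b * cc)⁻¹ * (a ^ 2 * (cc ^ 2 + g)) := by
    rw [htdef, real_inner_smul_right, inner_add_right, real_inner_smul_right,
      real_inner_smul_right, real_inner_self_eq_norm_sq, ← hadef, ← hgdef]
    ring
  have hT3 : ⟪w₃, t⟫ = (a * b * cc)⁻¹ * (cc ^ 2 * (a ^ 2 + g)) := by
    rw [htdef, real_inner_smul_right, inner_add_right, real_inner_smul_right,
      real_inner_smul_right, real_inner_self_eq_norm_sq, ← hccdef,
      real_inner_comm w₁ w₃, ← hgdef]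
    ring
  -- decomposition of v₂ - c and v₃ - c in the orthonormal frame (u/r, t)
  have hra : r ^ 2 ≠ 0 := by positivity
  set A2 : ℝ := (r ^ 2 - a ^ 2 / 2) / r ^ 2 with hA2def
  set B2 : ℝ := (a * b * cc)⁻¹ * (a ^ 2 * (cc ^ 2 + g)) with hB2def
  set A3 : ℝ := (r ^ 2 - cc ^ 2 / 2) / r ^ 2 with hA3def
  set B3 : ℝ := -((a * b * cc)⁻¹ * (cc ^ 2 * (a ^ 2 + g))) with hB3def
  have h2iu : ⟪v₂ - c, u⟫ = r ^ 2 - a ^ 2 / 2 := by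
    have hv2 : v₂ - c = w₁ + u := by rw [hw1, hudef]; abel
    rw [hv2, inner_add_left, h12, real_inner_self_eq_norm_sq, h₁]; ring
  have h2it : ⟪v₂ - c, t⟫ = B2 := by
    have hv2 : v₂ - c = w₁ + u := by rw [hw1, hudef]; abel
    rw [hv2, inner_add_left, htu, hT2, hB2def]; ring
  have h3iu : ⟪v₃ - c, u⟫ = r ^ 2 - cc ^ 2 / 2 := by
    have hv3 : v₃ - c = u - w₃ := by rw [hw3, hudef]; abel
    rw [hv3, inner_sub_left, h31, real_inner_self_eq_norm_sq, h₁]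
  have h3it : ⟪v₃ - c, t⟫ = B3 := by
    have hv3 : v₃ - c = u - w₃ := by rw [hw3, hudef]; abel
    rw [hv3, inner_sub_left, htu, hT3, hB3def]; ring
  have hcs2 : A2 ^ 2 + (B2 / r) ^ 2 = 1 := by
    rw [hA2def, hB2def]
    field_simp
    linear_combination (-4) * hG2
  have hcs3 : A3 ^ 2 + (B3 / r) ^ 2 = 1 := by
    rw [hA3def, hB3def]
    field_simp
    linear_combination (-4) * hG3
  have h2dec : v₂ - c = A2 • u + B2 • t := by
    have hm := norm_comb u t A2 B2 r h₁ ht1 htu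
    have hnz : ‖(v₂ - c) - (A2 • u + B2 • t)‖ ^ 2 = 0 := by
      rw [norm_sub_sq_real, hm, h₂, inner_add_right, real_inner_smul_right,
        real_inner_smul_right, h2iu, h2it]
      have : A2 * (r ^ 2 - a ^ 2 / 2) = A2 ^ 2 * r ^ 2 := by
        rw [hA2def]; field_simp
      rw [this]
      have hcs2' : A2 ^ 2 * r ^ 2 + B2 ^ 2 = r ^ 2 := by
        have h := hcs2
        field_simp at h
        linarith
      linear_combination -hcs2'
    exact sub_eq_zero.mp (norm_eq_zero.mp ((pow_eq_zero_iff (by norm_num : (2:ℕ) ≠ 0)).mp hnz))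
  have h3dec : v₃ - c = A3 • u + B3 • t := by
    have hm := norm_comb u t A3 B3 r h₁ ht1 htu
    have hnz : ‖(v₃ - c) - (A3 • u + B3 • t)‖ ^ 2 = 0 := by
      rw [norm_sub_sq_real, hm, h₃, inner_add_right, real_inner_smul_right,
        real_inner_smul_right, h3iu, h3it]
      have : A3 * (r ^ 2 - cc ^ 2 / 2) = A3 ^ 2 * r ^ 2 := by
        rw [hA3def]; field_simp
      rw [this]
      have hcs3' : A3 ^ 2 * r ^ 2 + B3 ^ 2 = r ^ 2 := by
        have h := hcs3
        field_simp at h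
        linarith
      linear_combination -hcs3'
    exact sub_eq_zero.mp (norm_eq_zero.mp ((pow_eq_zero_iff (by norm_num : (2:ℕ) ≠ 0)).mp hnz))
  -- angles
  have hA2lt : A2 < 1 := by
    rw [hA2def, div_lt_one (by positivity)]
    have : 0 < a ^ 2 := by positivity
    linarith
  have hA3lt : A3 < 1 := by
    rw [hA3def, div_lt_one (by positivity)]
    have : 0 < cc ^ 2 := by positivity
    linarith
  obtain ⟨α₂, hα₂0, hα₂2π, hcosα₂, hsinα₂⟩ := exists_angle A2 (B2 / r) hcs2 (ne_of_lt hA2lt)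
  obtain ⟨α₃, hα₃0, hα₃2π, hcosα₃, hsinα₃⟩ := exists_angle A3 (B3 / r) hcs3 (ne_of_lt hA3lt)
  have ha2c : a ^ 2 = 2 * r ^ 2 * (1 - Real.cos α₂) := by
    rw [hcosα₂, hA2def]; field_simp; ring
  have hcc2c : cc ^ 2 = 2 * r ^ 2 * (1 - Real.cos α₃) := by
    rw [hcosα₃, hA3def]; field_simp; ring
  have hB2s : B2 = r * Real.sin α₂ := by rw [hsinα₂]; field_simp
  have hB3s : B3 = r * Real.sin α₃ := by rw [hsinα₃]; field_simp
  have hkey : cc ^ 2 * B2 - a ^ 2 * B3 = a * b * cc := by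
    rw [hB2def, hB3def]; field_simp; linear_combination -hb2
  have htrig := trig_id (α₂ / 2) (α₃ / 2)
  rw [show 2 * (α₂ / 2) = α₂ by ring, show 2 * (α₃ / 2) = α₃ by ring] at htrig
  have hs2h : 0 < Real.sin (α₂ / 2) :=
    Real.sin_pos_of_pos_of_lt_pi (by linarith) (by linarith)
  have hs3h : 0 < Real.sin (α₃ / 2) :=
    Real.sin_pos_of_pos_of_lt_pi (by linarith) (by linarith)
  have hpos : 0 < 8 * r ^ 3 * (Real.sin (α₂ / 2) * Real.sin (α₃ / 2)
      * Real.sin (α₃ / 2 - α₂ / 2)) := by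
    have e : cc ^ 2 * B2 - a ^ 2 * B3
        = 2 * r ^ 3 * ((1 - Real.cos α₃) * Real.sin α₂ - (1 - Real.cos α₂) * Real.sin α₃) := by
      rw [hB2s, hB3s, ha2c, hcc2c]; ring
    have e2 : a * b * cc = 8 * r ^ 3 * (Real.sin (α₂ / 2) * Real.sin (α₃ / 2)
        * Real.sin (α₃ / 2 - α₂ / 2)) := by
      rw [← hkey, e, htrig]; ring
    rw [← e2]; positivity
  have hsd : 0 < Real.sin (α₃ / 2 - α₂ / 2) := by
    by_contra hle
    push_neg at hle
    have h1 : Real.sin (α₂ / 2) * Real.sin (α₃ / 2) * Real.sin (α₃ / 2 - α₂ / 2) ≤ 0 :=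
      mul_nonpos_iff.mpr (Or.inl ⟨(mul_pos hs2h hs3h).le, hle⟩)
    have h2 : (0:ℝ) ≤ 8 * r ^ 3 := by positivity
    exact absurd hpos (not_lt.mpr (mul_nonpos_iff.mpr (Or.inl ⟨h2, h1⟩)))
  have hαlt : α₂ < α₃ := by
    by_contra hle
    push_neg at hle
    have h1 : 0 ≤ α₂ / 2 - α₃ / 2 := by linarith
    have h2 : α₂ / 2 - α₃ / 2 ≤ Real.pi := by linarith
    have hnn := Real.sin_nonneg_of_nonneg_of_le_pi h1 h2
    rw [show α₃ / 2 - α₂ / 2 = -(α₂ / 2 - α₃ / 2) by ring, Real.sin_neg] at hsd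
    linarith
  -- derivative of the parametrization
  have hD : ∀ θ : ℝ, HasDerivAt
      (fun θ : ℝ => c + (Real.cos (θ / r) • u + (r * Real.sin (θ / r)) • t))
      ((-Real.sin (θ / r) * (1 / r)) • u + Real.cos (θ / r) • t) θ := by
    intro θ
    have h1 : HasDerivAt (fun s : ℝ => s / r) (1 / r) θ := by
      simpa using (hasDerivAt_id θ).div_const r
    have hcosD : HasDerivAt (fun s : ℝ => Real.cos (s / r)) (-Real.sin (θ / r) * (1 / r)) θ :=
      by have := (Real.hasDerivAt_cos (θ / r)).comp θ h1; exact this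
    have hsinD : HasDerivAt (fun s : ℝ => Real.sin (s / r)) (Real.cos (θ / r) * (1 / r)) θ :=
      by have := (Real.hasDerivAt_sin (θ / r)).comp θ h1; exact this
    have h2 := (hsinD.const_mul r).smul_const t
    have h3 : r * (Real.cos (θ / r) * (1 / r)) = Real.cos (θ / r) := by field_simp
    have h4 := (hcosD.smul_const u).add h2
    rw [h3] at h4
    exact h4.const_add c
  have hrne : r ≠ 0 := ne_of_gt hr
  refine ⟨ht1, ⟨fun θ : ℝ => c + (Real.cos (θ / r) • u + (r * Real.sin (θ / r)) • t),
    ?_, ⟨r * α₂, r * α₃, mul_pos hr hα₂0, (mul_lt_mul_iff_right₀ hr).mpr hαlt, ?_, ?_, ?_⟩,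
    ?_, ?_, ?_⟩⟩
  · show c + (Real.cos (0 / r) • u + (r * Real.sin (0 / r)) • t) = v₁
    rw [zero_div, Real.cos_zero, Real.sin_zero, one_smul, mul_zero, zero_smul, add_zero, hudef]
    abel
  · -- r * α₃ < 2 * π * r
    have := (mul_lt_mul_iff_right₀ hr).mpr hα₃2π
    linarith [this]
  · show c + (Real.cos (r * α₂ / r) • u + (r * Real.sin (r * α₂ / r)) • t) = v₂
    rw [mul_div_cancel_left₀ _ hrne, hcosα₂, hsinα₂]
    rw [show r * (B2 / r) = B2 by field_simp, ← h2dec]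
    abel
  · show c + (Real.cos (r * α₃ / r) • u + (r * Real.sin (r * α₃ / r)) • t) = v₃
    rw [mul_div_cancel_left₀ _ hrne, hcosα₃, hsinα₃]
    rw [show r * (B3 / r) = B3 by field_simp, ← h3dec]
    abel
  · intro θ
    have hsimp : c + (Real.cos (θ / r) • u + (r * Real.sin (θ / r)) • t) - c
        = Real.cos (θ / r) • u + (r * Real.sin (θ / r)) • t := by abel
    rw [hsimp, ← Real.sqrt_sq (norm_nonneg _), norm_comb u t _ _ r h₁ ht1 htu]
    have hone : Real.cos (θ / r) ^ 2 * r ^ 2 + (r * Real.sin (θ / r)) ^ 2 = r ^ 2 := by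
      have hpy := Real.sin_sq_add_cos_sq (θ / r)
      linear_combination r ^ 2 * hpy
    rw [hone, Real.sqrt_sq hr.le]
  · intro θ
    refine ⟨_, hD θ, ?_⟩
    rw [← Real.sqrt_sq (norm_nonneg _), norm_comb u t _ _ r h₁ ht1 htu]
    have hone : (-Real.sin (θ / r) * (1 / r)) ^ 2 * r ^ 2 + Real.cos (θ / r) ^ 2 = 1 := by
      have hpy := Real.sin_sq_add_cos_sq (θ / r)
      field_simp
      exact hpy
    rw [hone, Real.sqrt_one]
  · have hd0 := hD 0
    simp only [zero_div, Real.sin_zero, Real.cos_zero, neg_zero, zero_mul, zero_smul, one_smul,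
      zero_add] at hd0
    exact hd0
end

section
/- Let η ∈ C^∞(ℝ, [0,∞)) with support in [−1,1] and ∫η = 1, η_ε(x) = η(x/ε)/ε, and let f : ℝ/ℤ → ℝⁿ be Lipschitz. Then for every ε > 0 and every z, r > 0, the mollified curve f_ε = f ∗ η_ε satisfies ∫_{B_r(z)}∫_{B_r(z)} ‖f_ε'(x) − f_ε'(y)‖²/|x−y|² dx dy ≤ sup_w ∫_{B_r(w)}∫_{B_r(w)} ‖f'(x) − f'(y)‖²/|x−y|² dx dy. -/
open MeasureTheory
open scoped ENNReal

section Aux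
private lemma jensen_aux {n : ℕ} {ρ : ℝ → ℝ} (hρc : Continuous ρ) (hρ0 : ∀ t, 0 ≤ ρ t)
    (hρint : Integrable ρ) (hρ1 : ∫ t, ρ t = 1)
    {h : ℝ → EuclideanSpace ℝ (Fin n)} (hm : Measurable h) {C : ℝ}
    (hb : ∀ t, ‖h t‖ ≤ C) :
    ENNReal.ofReal (‖∫ t, ρ t • h t‖ ^ 2) ≤
      ∫⁻ t, ENNReal.ofReal (ρ t) * ENNReal.ofReal (‖h t‖ ^ 2) := by
  have hintn : Integrable (fun t => ρ t * ‖h t‖) := by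
    refine (hρint.mul_const C).mono'
      (hρc.aestronglyMeasurable.mul hm.norm.aestronglyMeasurable) ?_
    filter_upwards with t
    rw [Real.norm_eq_abs, abs_of_nonneg (mul_nonneg (hρ0 t) (norm_nonneg _))]
    exact mul_le_mul_of_nonneg_left (hb t) (hρ0 t)
  have h1 : ‖∫ t, ρ t • h t‖ ≤ ∫ t, ρ t * ‖h t‖ := by
    refine (norm_integral_le_integral_norm _).trans_eq
      (integral_congr_ae (.of_forall fun t => ?_))
    simp only [norm_smul, Real.norm_eq_abs, abs_of_nonneg (hρ0 t)]
  have e1 : ENNReal.ofReal (∫ t, ρ t * ‖h t‖) = ∫⁻ t, ENNReal.ofReal (ρ t * ‖h t‖) :=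
    ofReal_integral_eq_lintegral_ofReal hintn
      (.of_forall fun t => mul_nonneg (hρ0 t) (norm_nonneg _))
  have eρ : (∫⁻ t, ENNReal.ofReal (ρ t)) = 1 := by
    rw [← ofReal_integral_eq_lintegral_ofReal hρint (.of_forall hρ0), hρ1, ENNReal.ofReal_one]
  set u : ℝ → ℝ≥0∞ := fun t => ENNReal.ofReal (ρ t) ^ (1 / 2 : ℝ) with hu_def
  set v : ℝ → ℝ≥0∞ := fun t => ENNReal.ofReal (ρ t) ^ (1 / 2 : ℝ) * ENNReal.ofReal ‖h t‖
    with hv_def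
  have hρm : Measurable fun t => ENNReal.ofReal (ρ t) := hρc.measurable.ennreal_ofReal
  have hum : Measurable u := hρm.pow_const _
  have hvm : Measurable v := hum.mul hm.norm.ennreal_ofReal
  have hpq : Real.HolderConjugate 2 2 := Real.HolderConjugate.two_two
  have hCS := ENNReal.lintegral_mul_le_Lp_mul_Lq volume hpq hum.aemeasurable hvm.aemeasurable
  have huv : ∀ t, (u * v) t = ENNReal.ofReal (ρ t * ‖h t‖) := by
    intro t
    simp only [Pi.mul_apply, hu_def, hv_def]
    rw [← mul_assoc, ← ENNReal.rpow_add_of_nonneg (1/2) (1/2) (by norm_num) (by norm_num),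
      show (1/2 + 1/2 : ℝ) = 1 by norm_num, ENNReal.rpow_one, ENNReal.ofReal_mul (hρ0 t)]
  have hu2 : ∀ t, u t ^ (2:ℝ) = ENNReal.ofReal (ρ t) := by
    intro t
    rw [hu_def, ← ENNReal.rpow_mul]
    norm_num
  have hv2 : ∀ t, v t ^ (2:ℝ) = ENNReal.ofReal (ρ t) * ENNReal.ofReal (‖h t‖ ^ 2) := by
    intro t
    rw [hv_def]
    rw [ENNReal.mul_rpow_of_nonneg _ _ (by norm_num : (0:ℝ) ≤ 2), ← ENNReal.rpow_mul,
      show (2:ℝ) = ((2:ℕ):ℝ) by norm_num, ENNReal.rpow_natCast,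
      ← ENNReal.ofReal_pow (norm_nonneg _)]
    norm_num
  calc ENNReal.ofReal (‖∫ t, ρ t • h t‖ ^ 2)
      = ENNReal.ofReal ‖∫ t, ρ t • h t‖ ^ 2 := ENNReal.ofReal_pow (norm_nonneg _) 2
    _ ≤ ENNReal.ofReal (∫ t, ρ t * ‖h t‖) ^ 2 := by
        gcongr
    _ = (∫⁻ t, (u * v) t) ^ 2 := by
        rw [e1]
        congr 1
        exact lintegral_congr fun t => (huv t).symm
    _ ≤ ((∫⁻ t, u t ^ (2:ℝ)) ^ (1/2:ℝ) * (∫⁻ t, v t ^ (2:ℝ)) ^ (1/2:ℝ)) ^ 2 := by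
        gcongr
    _ = ((∫⁻ t, ENNReal.ofReal (ρ t) * ENNReal.ofReal (‖h t‖ ^ 2)) ^ (1/2:ℝ)) ^ 2 := by
        rw [lintegral_congr hu2, eρ, ENNReal.one_rpow, one_mul, lintegral_congr hv2]
    _ = ∫⁻ t, ENNReal.ofReal (ρ t) * ENNReal.ofReal (‖h t‖ ^ 2) := by
        rw [← ENNReal.rpow_natCast _ 2, ← ENNReal.rpow_mul]
        norm_num
private lemma shift_lintegral (k : ℝ → ℝ≥0∞) (a b t : ℝ) :
    ∫⁻ y in Set.Ioo a b, k (y - t) = ∫⁻ y in Set.Ioo (a - t) (b - t), k y := by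
  have hmp : MeasurePreserving (fun y : ℝ => y - t) volume volume :=
    measurePreserving_sub_right volume t
  have hemb : MeasurableEmbedding (fun y : ℝ => y - t) :=
    (Homeomorph.subRight t).measurableEmbedding
  have hpre : (fun y : ℝ => y - t) ⁻¹' Set.Ioo (a - t) (b - t) = Set.Ioo a b := by
    ext y
    simp [Set.mem_Ioo, sub_lt_sub_iff_right, lt_sub_iff_add_lt, sub_lt_iff_lt_add]
  rw [← hpre, hmp.setLIntegral_comp_preimage_emb hemb]

end Aux

set_option maxHeartbeats 1000000 in
/-- Mollification does not increase the local Gagliardo seminorm: for a Lipschitz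
periodic curve `f` with a.e. derivative `g` and mollifier `η_ε`, the mollified
derivative `g ∗ η_ε` satisfies
`∫∫_{B_r(z)} ‖g_ε(x) − g_ε(y)‖²/|x−y|² ≤ sup_w ∫∫_{B_r(w)} ‖g(x) − g(y)‖²/|x−y|²`. -/
theorem mollified_gagliardo_le (n : ℕ) (η : ℝ → ℝ)
    (hη : ContDiff ℝ (⊤ : ℕ∞) η) (hη0 : ∀ x, 0 ≤ η x)
    (hsupp : Function.support η ⊆ Set.Icc (-1) 1) (hηint : ∫ x, η x = 1)
    (f g : ℝ → EuclideanSpace ℝ (Fin n)) (L : NNReal)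
    (hf : LipschitzWith L f) (hper : Function.Periodic f 1)
    (hg : ∀ᵐ x : ℝ, HasDerivAt f (g x) x)
    (ε : ℝ) (hε : 0 < ε) (z r : ℝ) (hr : 0 < r) :
    (∫⁻ x in Set.Ioo (z - r) (z + r), ∫⁻ y in Set.Ioo (z - r) (z + r),
        ENNReal.ofReal
          (‖(∫ t : ℝ, (η (t / ε) / ε) • g (x - t)) - ∫ t : ℝ, (η (t / ε) / ε) • g (y - t)‖ ^ 2
            / |x - y| ^ 2)) ≤
      ⨆ w : ℝ, ∫⁻ x in Set.Ioo (w - r) (w + r), ∫⁻ y in Set.Ioo (w - r) (w + r),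
        ENNReal.ofReal (‖g x - g y‖ ^ 2 / |x - y| ^ 2) := by
  classical
  -- the mollifier at scale ε
  set ρ : ℝ → ℝ := fun t => η (t / ε) / ε with hρdef
  have hρc : Continuous ρ := ((hη.continuous).comp (continuous_id.div_const ε)).div_const ε
  have hρ0 : ∀ t, 0 ≤ ρ t := fun t => div_nonneg (hη0 _) hε.le
  have hρcs : HasCompactSupport ρ := by
    refine HasCompactSupport.intro (isCompact_Icc (a := -ε) (b := ε)) fun x hx => ?_
    simp only [hρdef, div_eq_zero_iff]
    left
    by_contra hne
    have hmem : x / ε ∈ Set.Icc (-1:ℝ) 1 := hsupp (Function.mem_support.mpr hne)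
    refine hx ⟨?_, ?_⟩
    · have := hmem.1
      rw [le_div_iff₀ hε] at this
      linarith
    · have := hmem.2
      rw [div_le_one hε] at this
      exact this
  have hρint : Integrable ρ := hρc.integrable_of_hasCompactSupport hρcs
  have hρ1 : ∫ t, ρ t = 1 := by
    have hc : (∫ x : ℝ, η (x / ε)) = |ε| • ∫ y : ℝ, η y := Measure.integral_comp_div η ε
    simp only [hρdef]
    rw [integral_div, hc, hηint, smul_eq_mul, mul_one, abs_of_pos hε, div_self hε.ne']
  -- a measurable, everywhere bounded version of g
  set g0 : ℝ → EuclideanSpace ℝ (Fin n) :=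
    fun x => if ‖deriv f x‖ ≤ (L : ℝ) then deriv f x else 0 with hg0def
  have hdm : Measurable (deriv f) := measurable_deriv f
  have hg0m : Measurable g0 :=
    Measurable.ite (measurableSet_le hdm.norm measurable_const) hdm measurable_const
  have hg0b : ∀ x, ‖g0 x‖ ≤ (L : ℝ) := by
    intro x
    by_cases hx : ‖deriv f x‖ ≤ (L : ℝ) <;> simp [hg0def, hx]
  have hgg0 : ∀ᵐ x : ℝ, g x = g0 x := by
    filter_upwards [hg] with x hx
    have hd : deriv f x = g x := hx.deriv
    have hle : ‖g x‖ ≤ (L : ℝ) := by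
      have h2 := hx.hasFDerivAt.le_of_lipschitz hf
      rwa [ContinuousLinearMap.norm_toSpanSingleton] at h2
    simp [hg0def, hd, hle]
  -- replace `g` by `g0` on the left-hand side
  have hGeq : ∀ x : ℝ,
      (∫ t : ℝ, (η (t / ε) / ε) • g (x - t)) = ∫ t : ℝ, ρ t • g0 (x - t) := by
    intro x
    refine integral_congr_ae ?_
    have hmp : MeasurePreserving (fun t : ℝ => x - t) volume volume :=
      Measure.measurePreserving_sub_left volume x
    have hcomp : (g ∘ fun t : ℝ => x - t) =ᵐ[volume] (g0 ∘ fun t : ℝ => x - t) :=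
      ae_eq_comp hmp.measurable.aemeasurable (by rwa [hmp.map_eq])
    filter_upwards [hcomp] with t ht
    simp only [Function.comp_apply] at ht
    rw [ht]
  -- replace `g` by `g0` on the right-hand side
  have hFeq : ∀ w : ℝ,
      (∫⁻ x in Set.Ioo (w - r) (w + r), ∫⁻ y in Set.Ioo (w - r) (w + r),
        ENNReal.ofReal (‖g x - g y‖ ^ 2 / |x - y| ^ 2)) =
      ∫⁻ x in Set.Ioo (w - r) (w + r), ∫⁻ y in Set.Ioo (w - r) (w + r),
        ENNReal.ofReal (‖g0 x - g0 y‖ ^ 2 / |x - y| ^ 2) := by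
    intro w
    refine lintegral_congr_ae ?_
    filter_upwards [ae_restrict_of_ae hgg0] with x hx
    refine lintegral_congr_ae ?_
    filter_upwards [ae_restrict_of_ae hgg0] with y hy
    rw [hx, hy]
  have hrw : (∫⁻ x in Set.Ioo (z - r) (z + r), ∫⁻ y in Set.Ioo (z - r) (z + r),
      ENNReal.ofReal
        (‖(∫ t : ℝ, (η (t / ε) / ε) • g (x - t)) - ∫ t : ℝ, (η (t / ε) / ε) • g (y - t)‖ ^ 2
          / |x - y| ^ 2)) =
      ∫⁻ x in Set.Ioo (z - r) (z + r), ∫⁻ y in Set.Ioo (z - r) (z + r),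
        ENNReal.ofReal
          (‖(∫ t : ℝ, ρ t • g0 (x - t)) - ∫ t : ℝ, ρ t • g0 (y - t)‖ ^ 2 / |x - y| ^ 2) :=
    lintegral_congr fun x => lintegral_congr fun y => by rw [hGeq x, hGeq y]
  rw [hrw, iSup_congr hFeq]
  -- now everything is in terms of `g0`
  set Φ : ℝ → ℝ → ℝ≥0∞ := fun a b => ENNReal.ofReal (‖g0 a - g0 b‖ ^ 2 / |a - b| ^ 2) with hΦdef
  have hΦm : Measurable fun p : ℝ × ℝ => Φ p.1 p.2 := by
    apply Measurable.ennreal_ofReal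
    exact (((hg0m.comp measurable_fst).sub (hg0m.comp measurable_snd)).norm.pow_const 2).div
      ((measurable_fst.sub measurable_snd).abs.pow_const 2)
  clear_value ρ g0 Φ
  -- the integrability of the mollified integrand
  have hint : ∀ x : ℝ, Integrable (fun t => ρ t • g0 (x - t)) := by
    intro x
    refine (hρint.mul_const (L : ℝ)).mono'
      (hρc.aestronglyMeasurable.smul
        ((hg0m.comp (measurable_const.sub measurable_id)).aestronglyMeasurable)) ?_
    filter_upwards with t
    rw [norm_smul, Real.norm_eq_abs, abs_of_nonneg (hρ0 t)]
    exact mul_le_mul_of_nonneg_left (hg0b _) (hρ0 t)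
  -- the pointwise Jensen bound
  have key : ∀ x y : ℝ,
      ENNReal.ofReal (‖(∫ t : ℝ, ρ t • g0 (x - t)) - ∫ t : ℝ, ρ t • g0 (y - t)‖ ^ 2
        / |x - y| ^ 2) ≤
      ∫⁻ t, ENNReal.ofReal (ρ t) * Φ (x - t) (y - t) := by
    intro x y
    by_cases hxy : x = y
    · simp [hxy]
    have hc : (0:ℝ) < |x - y| ^ 2 := pow_pos (abs_pos.mpr (sub_ne_zero.mpr hxy)) 2
    have hcne : ENNReal.ofReal (|x - y| ^ 2) ≠ 0 := (ENNReal.ofReal_pos.mpr hc).ne'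
    have hsub : (∫ t : ℝ, ρ t • g0 (x - t)) - ∫ t : ℝ, ρ t • g0 (y - t) =
        ∫ t : ℝ, ρ t • (g0 (x - t) - g0 (y - t)) := by
      rw [← integral_sub (hint x) (hint y)]
      exact integral_congr_ae (.of_forall fun t => (smul_sub _ _ _).symm)
    have hhm : Measurable fun t : ℝ => g0 (x - t) - g0 (y - t) :=
      (hg0m.comp (measurable_const.sub measurable_id)).sub
        (hg0m.comp (measurable_const.sub measurable_id))
    have hhb : ∀ t : ℝ, ‖g0 (x - t) - g0 (y - t)‖ ≤ (L : ℝ) + (L : ℝ) := fun t =>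
      (norm_sub_le _ _).trans (add_le_add (hg0b _) (hg0b _))
    have hJ := jensen_aux hρc hρ0 hρint hρ1 hhm hhb
    calc ENNReal.ofReal (‖(∫ t : ℝ, ρ t • g0 (x - t)) - ∫ t : ℝ, ρ t • g0 (y - t)‖ ^ 2
          / |x - y| ^ 2)
        = ENNReal.ofReal (‖∫ t : ℝ, ρ t • (g0 (x - t) - g0 (y - t))‖ ^ 2)
            / ENNReal.ofReal (|x - y| ^ 2) := by
          rw [hsub, ENNReal.ofReal_div_of_pos hc]
      _ ≤ (∫⁻ t, ENNReal.ofReal (ρ t) * ENNReal.ofReal (‖g0 (x - t) - g0 (y - t)‖ ^ 2))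
            / ENNReal.ofReal (|x - y| ^ 2) := ENNReal.div_le_div_right hJ _
      _ = ∫⁻ t, ENNReal.ofReal (ρ t) * Φ (x - t) (y - t) := by
          rw [ENNReal.div_eq_inv_mul, ← lintegral_const_mul' _ _
            (ENNReal.inv_ne_top.mpr hcne)]
          refine lintegral_congr fun t => ?_
          simp only [hΦdef]
          have habs : x - t - (y - t) = x - y := by ring
          rw [habs, ENNReal.ofReal_div_of_pos hc, ENNReal.div_eq_inv_mul]
          ring
  -- main estimate
  set s : Set ℝ := Set.Ioo (z - r) (z + r) with hsdef
  have hρem : Measurable fun t => ENNReal.ofReal (ρ t) := hρc.measurable.ennreal_ofReal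
  refine le_trans (lintegral_mono fun x => lintegral_mono fun y => key x y) ?_
  have hswap1 : ∀ x : ℝ, (∫⁻ y in s, ∫⁻ t, ENNReal.ofReal (ρ t) * Φ (x - t) (y - t))
      = ∫⁻ t, ENNReal.ofReal (ρ t) * ∫⁻ y in s, Φ (x - t) (y - t) := by
    intro x
    rw [lintegral_lintegral_swap (Measurable.aemeasurable ((hρem.comp measurable_snd).mul
      (hΦm.comp ((measurable_const.sub measurable_snd).prodMk
        (measurable_fst.sub measurable_snd)))))]
    exact lintegral_congr fun t => lintegral_const_mul' _ _ ENNReal.ofReal_ne_top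
  rw [lintegral_congr hswap1]
  have hswap2 : (∫⁻ x in s, ∫⁻ t, ENNReal.ofReal (ρ t) * ∫⁻ y in s, Φ (x - t) (y - t))
      = ∫⁻ t, ∫⁻ x in s, ENNReal.ofReal (ρ t) * ∫⁻ y in s, Φ (x - t) (y - t) := by
    refine lintegral_lintegral_swap (Measurable.aemeasurable ?_)
    refine (hρem.comp measurable_snd).mul ?_
    have hin : Measurable fun p : (ℝ × ℝ) × ℝ => Φ (p.1.1 - p.1.2) (p.2 - p.1.2) :=
      hΦm.comp (((measurable_fst.comp measurable_fst).sub
        (measurable_snd.comp measurable_fst)).prodMk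
        (measurable_snd.sub (measurable_snd.comp measurable_fst)))
    exact hin.lintegral_prod_right'
  rw [hswap2]
  have hpull : ∀ t : ℝ, (∫⁻ x in s, ENNReal.ofReal (ρ t) * ∫⁻ y in s, Φ (x - t) (y - t))
      = ENNReal.ofReal (ρ t) * ∫⁻ x in s, ∫⁻ y in s, Φ (x - t) (y - t) :=
    fun t => lintegral_const_mul' _ _ ENNReal.ofReal_ne_top
  rw [lintegral_congr hpull]
  have hbound : ∀ t : ℝ, (∫⁻ x in s, ∫⁻ y in s, Φ (x - t) (y - t)) ≤
      ⨆ w : ℝ, ∫⁻ x in Set.Ioo (w - r) (w + r), ∫⁻ y in Set.Ioo (w - r) (w + r),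
        ENNReal.ofReal (‖g0 x - g0 y‖ ^ 2 / |x - y| ^ 2) := by
    intro t
    have hinner : ∀ x : ℝ, (∫⁻ y in s, Φ (x - t) (y - t)) =
        ∫⁻ y in Set.Ioo (z - t - r) (z - t + r), Φ (x - t) y := by
      intro x
      rw [hsdef, shift_lintegral (Φ (x - t)) (z - r) (z + r) t]
      congr 2 <;> ring
    have h1 : (∫⁻ x in s, ∫⁻ y in s, Φ (x - t) (y - t)) =
        ∫⁻ x in Set.Ioo (z - t - r) (z - t + r),
          ∫⁻ y in Set.Ioo (z - t - r) (z - t + r), Φ x y := by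
      rw [lintegral_congr hinner, hsdef,
        shift_lintegral (fun a => ∫⁻ y in Set.Ioo (z - t - r) (z - t + r), Φ a y)
          (z - r) (z + r) t]
      congr 2 <;> ring
    rw [h1]
    simp only [hΦdef]
    exact le_iSup (fun w => ∫⁻ x in Set.Ioo (w - r) (w + r),
      ∫⁻ y in Set.Ioo (w - r) (w + r),
        ENNReal.ofReal (‖g0 x - g0 y‖ ^ 2 / |x - y| ^ 2)) (z - t)
  refine le_trans (lintegral_mono fun t => mul_le_mul_right (hbound t) _) ?_
  rw [lintegral_mul_const _ hρem,
    ← ofReal_integral_eq_lintegral_ofReal hρint (.of_forall hρ0), hρ1,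
    ENNReal.ofReal_one, one_mul]
end

section
/- For unit vectors u, v ∈ ℝⁿ, one has ‖u‖·‖v‖ − ⟨u,v⟩ = ½‖u − v‖²; consequently for a Lipschitz curve f with x,y ∈ ℝ/ℤ, w = x−y, the pointwise estimate d_f(x,y)² − ‖f(x)−f(y)‖² ≤ C ∫₀¹∫₀¹ (‖f'(x+σ₁w)‖‖f'(x+σ₂w)‖ − ⟨f'(x+σ₁w), f'(x+σ₂w)⟩) dσ₁ dσ₂ · |x−y|² holds with a constant depending only on the Lipschitz and bi-Lipschitz constants of f (for |x−y| ≤ 1/2). -/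
/-!
Write `φ σ = g (x + σ (y - x))`. After this change of variables the arclength from `x` to `y`
is `(y - x) ∫₀¹ ‖φ‖` and, by the fundamental theorem of calculus, the chord is
`f y - f x = (y - x) • ∫₀¹ φ`. Expanding the double integral gives `(∫₀¹ ‖φ‖)² - ‖∫₀¹ φ‖²`,
so for the arc from `x` to `y` the estimate is an identity with `C = 1`; the intrinsic
distance, the shorter of the two arcs, is dominated by it.
-/

open RealInnerProductSpace MeasureTheory intervalIntegral

theorem norm_mul_norm_sub_inner_eq_half_norm_sub_sq {E : Type*} [NormedAddCommGroup E]
    [InnerProductSpace ℝ E] {u v : E} (hu : ‖u‖ = 1) (hv : ‖v‖ = 1) :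
    ‖u‖ * ‖v‖ - ⟪u, v⟫ = ‖u - v‖ ^ 2 / 2 := by
  rw [norm_sub_sq_real, hu, hv]
  ring

theorem sq_min_sub_le_sq {a T : ℝ} (ha : 0 ≤ a) (hT : 0 ≤ T) : min a (T - a) ^ 2 ≤ a ^ 2 :=
  sq_le_sq' (le_min (by linarith) (by linarith)) (min_le_left _ _)

theorem intervalIntegrable_of_norm_le {E : Type*} [NormedAddCommGroup E] {g : ℝ → E}
    (hg : AEStronglyMeasurable g volume) {M : ℝ} (hM : ∀ t, ‖g t‖ ≤ M) (a b : ℝ) :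
    IntervalIntegrable g volume a b :=
  intervalIntegrable_iff.2 <|
    Measure.integrableOn_of_bounded measure_Ioc_lt_top.ne hg (ae_of_all _ hM)

theorem IntervalIntegrable.const_inner {E : Type*} [NormedAddCommGroup E]
    [InnerProductSpace ℝ E] {φ : ℝ → E} {a b : ℝ} (hφ : IntervalIntegrable φ volume a b)
    (c : E) : IntervalIntegrable (fun t => ⟪c, φ t⟫) volume a b :=
  ⟨hφ.1.const_inner c, hφ.2.const_inner c⟩

theorem intervalIntegral.integral_eq_sub_smul_integral_zero_one {F : Type*}
    [NormedAddCommGroup F] [NormedSpace ℝ F] (h : ℝ → F) (x y : ℝ) :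
    ∫ t in x..y, h t = (y - x) • ∫ σ in (0 : ℝ)..1, h (x + σ * (y - x)) := by
  simpa [mul_comm] using (smul_integral_comp_add_mul (a := 0) (b := 1) h (y - x) x).symm

theorem intervalIntegral.integral_const_inner {E : Type*} [NormedAddCommGroup E]
    [InnerProductSpace ℝ E] [CompleteSpace E] {φ : ℝ → E} {a b : ℝ}
    (hφ : IntervalIntegrable φ volume a b) (c : E) :
    ∫ t in a..b, ⟪c, φ t⟫ = ⟪c, ∫ t in a..b, φ t⟫ :=
  (innerSL ℝ c).intervalIntegral_comp_comm hφ

theorem integral_integral_norm_mul_norm_sub_inner {E : Type*} [NormedAddCommGroup E]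
    [InnerProductSpace ℝ E] [CompleteSpace E] {φ : ℝ → E} {a b : ℝ}
    (hφ : IntervalIntegrable φ volume a b) :
    ∫ s in a..b, ∫ t in a..b, (‖φ s‖ * ‖φ t‖ - ⟪φ s, φ t⟫) =
      (∫ t in a..b, ‖φ t‖) ^ 2 - ‖∫ t in a..b, φ t‖ ^ 2 := by
  have inner_step : ∀ s, ∫ t in a..b, (‖φ s‖ * ‖φ t‖ - ⟪φ s, φ t⟫) =
      ‖φ s‖ * (∫ t in a..b, ‖φ t‖) - ⟪∫ t in a..b, φ t, φ s⟫ := fun s => by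
    rw [integral_sub (hφ.norm.const_mul _) (hφ.const_inner _),
      intervalIntegral.integral_const_mul, integral_const_inner hφ, real_inner_comm]
  simp_rw [inner_step]
  rw [integral_sub (hφ.norm.mul_const _) (hφ.const_inner _), intervalIntegral.integral_mul_const,
    integral_const_inner hφ, real_inner_self_eq_norm_sq]
  ring

theorem sq_integral_norm_deriv_sub_sq_norm_sub {E : Type*} [NormedAddCommGroup E]
    [InnerProductSpace ℝ E] [CompleteSpace E] {f g : ℝ → E} {L : NNReal}
    (hf : LipschitzWith L f) (hg : ∀ t, HasDerivAt f (g t) t) (x y : ℝ) :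
    (∫ t in x..y, ‖g t‖) ^ 2 - ‖f x - f y‖ ^ 2 =
      (∫ σ₁ in (0 : ℝ)..1, ∫ σ₂ in (0 : ℝ)..1,
        (‖g (x + σ₁ * (y - x))‖ * ‖g (x + σ₂ * (y - x))‖ -
          ⟪g (x + σ₁ * (y - x)), g (x + σ₂ * (y - x))⟫)) * (x - y) ^ 2 := by
  have hg_meas : StronglyMeasurable g :=
    funext (fun t => (hg t).deriv) ▸ stronglyMeasurable_deriv f
  have hg_le : ∀ t, ‖g t‖ ≤ L := fun t => (hg t).le_of_lipschitz hf
  set φ : ℝ → E := fun σ => g (x + σ * (y - x))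
  have hφ : IntervalIntegrable φ volume 0 1 :=
    intervalIntegrable_of_norm_le (hg_meas.comp_measurable (by fun_prop)).aestronglyMeasurable
      (fun _ => hg_le _) 0 1
  have arclength : ∫ t in x..y, ‖g t‖ = (y - x) * ∫ σ in (0 : ℝ)..1, ‖φ σ‖ :=
    integral_eq_sub_smul_integral_zero_one (fun t => ‖g t‖) x y
  have chord : f y - f x = (y - x) • ∫ σ in (0 : ℝ)..1, φ σ := by
    rw [← integral_eq_sub_of_hasDerivAt (fun t _ => hg t)
      (intervalIntegrable_of_norm_le hg_meas.aestronglyMeasurable hg_le x y),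
      integral_eq_sub_smul_integral_zero_one]
  rw [integral_integral_norm_mul_norm_sub_inner hφ, arclength, ← norm_neg, neg_sub, chord,
    norm_smul, Real.norm_eq_abs, mul_pow, mul_pow, sq_abs]
  ring

theorem intrinsic_extrinsic_estimate_general (n : ℕ)
    (f g : ℝ → EuclideanSpace ℝ (Fin n)) (L : NNReal)
    (hf : LipschitzWith L f)
    (hg : ∀ x : ℝ, HasDerivAt f (g x) x) :
    (∀ u v : EuclideanSpace ℝ (Fin n), ‖u‖ = 1 → ‖v‖ = 1 →
      ‖u‖ * ‖v‖ - ⟪u, v⟫ = ‖u - v‖ ^ 2 / 2) ∧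
    ∃ C : ℝ, ∀ x y : ℝ, x ≠ y → |x - y| ≤ 1 / 2 →
      (min |∫ t in y..x, ‖g t‖| ((∫ t in (0 : ℝ)..1, ‖g t‖) - |∫ t in y..x, ‖g t‖|)) ^ 2
          - ‖f x - f y‖ ^ 2 ≤
        C * (∫ σ₁ in (0 : ℝ)..1, ∫ σ₂ in (0 : ℝ)..1,
            (‖g (x + σ₁ * (y - x))‖ * ‖g (x + σ₂ * (y - x))‖ -
              ⟪g (x + σ₁ * (y - x)), g (x + σ₂ * (y - x))⟫)) * |x - y| ^ 2 := by
  refine ⟨fun u v hu hv => norm_mul_norm_sub_inner_eq_half_norm_sub_sq hu hv, 1,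
    fun x y _ _ => ?_⟩
  have total_nonneg : 0 ≤ ∫ t in (0 : ℝ)..1, ‖g t‖ :=
    integral_nonneg zero_le_one fun _ _ => norm_nonneg _
  calc _ ≤ |∫ t in y..x, ‖g t‖| ^ 2 - ‖f x - f y‖ ^ 2 :=
        sub_le_sub_right (sq_min_sub_le_sq (abs_nonneg _) total_nonneg) _
    _ = _ := by
        rw [integral_symm, abs_neg, sq_abs, sq_integral_norm_deriv_sub_sq_norm_sub hf hg,
          sq_abs, one_mul]

/-- For unit vectors `u, v`, `‖u‖‖v‖ − ⟨u,v⟩ = ½‖u−v‖²`; consequently for a regular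
bi-Lipschitz periodic curve `f` with derivative `g`, with `w = x − y`, the intrinsic
distance `d_f` satisfies
`d_f(x,y)² − ‖f(x)−f(y)‖² ≤ C ∫₀¹∫₀¹ (‖g(x+σ₁w)‖‖g(x+σ₂w)‖ − ⟨g(x+σ₁w), g(x+σ₂w)⟩) dσ · |x−y|²`
with a constant depending only on the Lipschitz and bi-Lipschitz constants. -/
theorem intrinsic_extrinsic_estimate (n : ℕ)
    (f g : ℝ → EuclideanSpace ℝ (Fin n)) (L : NNReal) (c : ℝ) (hc : 0 < c)
    (hf : LipschitzWith L f) (hper : Function.Periodic f 1)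
    (hg : ∀ x : ℝ, HasDerivAt f (g x) x)
    (hbl : ∀ x y : ℝ, |x - y| ≤ 1 / 2 → c * |x - y| ≤ ‖f x - f y‖) :
    (∀ u v : EuclideanSpace ℝ (Fin n), ‖u‖ = 1 → ‖v‖ = 1 →
      ‖u‖ * ‖v‖ - ⟪u, v⟫ = ‖u - v‖ ^ 2 / 2) ∧
    ∃ C : ℝ, ∀ x y : ℝ, x ≠ y → |x - y| ≤ 1 / 2 →
      (min |∫ t in y..x, ‖g t‖| ((∫ t in (0 : ℝ)..1, ‖g t‖) - |∫ t in y..x, ‖g t‖|)) ^ 2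
          - ‖f x - f y‖ ^ 2 ≤
        C * (∫ σ₁ in (0 : ℝ)..1, ∫ σ₂ in (0 : ℝ)..1,
            (‖g (x + σ₁ * (y - x))‖ * ‖g (x + σ₂ * (y - x))‖ -
              ⟪g (x + σ₁ * (y - x)), g (x + σ₂ * (y - x))⟫)) * |x - y| ^ 2 :=
  intrinsic_extrinsic_estimate_general n f g L hf hg
end
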